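/- On the unit square with Lebesgue area measure and the componentwise-≤ relation, for T_min(a) = {(x₁,x₂) ∈ [0,1]² : min(x₁,x₂) ≤ a}, the diversity div(T_min(a)) tends to 3/4 as a → 0⁺. -/

import Mathlib

open MeasureTheory Filter
open scoped ENNReal

/-- The componentwise-≤ relation on `ℝ²`. -/
def Rsq (p q : ℝ × ℝ) : Prop := p.1 ≤ q.1 ∧ p.2 ≤ q.2

/-- Lebesgue area measure restricted to the unit square `[0,1]²`. -/
noncomputable def μsq : Measure (ℝ × ℝ) :=
  (volume : Measure (ℝ × ℝ)).restrict (Set.Icc 0 1 ×ˢ Set.Icc 0 1)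

/-- The choice offered by a set `A`. -/
noncomputable def cho (A : Set (ℝ × ℝ)) : ℝ≥0∞ :=
  (μsq.prod μsq) {p : (ℝ × ℝ) × (ℝ × ℝ) |
    p.1 ∈ A ∧ p.2 ∈ A ∧ (Rsq p.1 p.2 ↔ Rsq p.2 p.1)}

/-!
A pair of points of `T = T_min(a)` is either indifferent (counted by `cho`) or strictly ordered
one way or the other, and swapping the two points shows that both strict parts have the same mass:
`cho T + 2 · (μ × μ){x < y} = μ(T)²`. Since `μ` has no atoms, `x < y` and `x ≤ y` have the same
mass, and since `T` is a lower set this mass is `∫_T μ(Iic y) dy = ∫_T y₁ y₂ dy`, which is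
`1/4 - ((1 - a²)/2)²` because the complement of `T` in the square is `(a, 1]²`. Hence
`cho T = 3a² - 4a³ + 3a⁴/2` and `μ T = 2a - a²`, so the diversity is `(3 - 4a + 3a²/2) / (2 - a)²`.
-/

open Set

namespace MeasureTheory.Measure

variable {α : Type*} [MeasurableSpace α] (μ : Measure α) [SFinite μ] {A : Set α}

theorem prod_diagonal_eq_zero [MeasurableEq α] [NullSingletonClass μ] :
    (μ.prod μ) (diagonal α) = 0 := by
  rw [prod_apply measurableSet_diagonal]
  have hslice (x : α) : Prod.mk x ⁻¹' diagonal α = {x} := by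
    ext y; simp [eq_comm]
  simp [hslice]

theorem prod_inter_lt_eq_prod_inter_le [PartialOrder α] [MeasurableEq α] [NullSingletonClass μ] :
    (μ.prod μ) (A ×ˢ A ∩ {p | p.1 < p.2}) = (μ.prod μ) (A ×ˢ A ∩ {p | p.1 ≤ p.2}) := by
  have hlt : A ×ˢ A ∩ {p : α × α | p.1 < p.2} = (A ×ˢ A ∩ {p | p.1 ≤ p.2}) \ diagonal α := by
    ext p
    simp only [mem_inter_iff, Set.mem_sdiff, mem_ofPred_eq, mem_diagonal_iff, lt_iff_le_and_ne]
    tauto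
  rw [hlt, measure_sdiff_null (prod_diagonal_eq_zero μ)]

variable [Preorder α]

theorem prod_inter_le_of_isLowerSet (hle : MeasurableSet {p : α × α | p.1 ≤ p.2})
    (hA : MeasurableSet A) (hAl : IsLowerSet A) :
    (μ.prod μ) (A ×ˢ A ∩ {p | p.1 ≤ p.2}) = ∫⁻ y in A, μ (Iic y) ∂μ := by
  have hslice (y : α) :
      μ ((·, y) ⁻¹' (A ×ˢ A ∩ {p | p.1 ≤ p.2})) = A.indicator (fun y => μ (Iic y)) y := by
    by_cases hy : y ∈ A
    · rw [indicator_of_mem hy]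
      congr 1; ext x
      simp only [mem_preimage, mem_inter_iff, mem_prod, mem_ofPred_eq, mem_Iic]
      exact ⟨fun h => h.2, fun h => ⟨⟨hAl h hy, hy⟩, h⟩⟩
    · rw [indicator_of_notMem hy, ← measure_empty (μ := μ)]
      congr 1; ext x
      simp [hy]
  rw [prod_apply_symm ((hA.prod hA).inter hle), lintegral_congr hslice, lintegral_indicator hA]

theorem prod_comparable_add_two_mul_prod_lt (hle : MeasurableSet {p : α × α | p.1 ≤ p.2})
    (hA : MeasurableSet A) :
    (μ.prod μ) (A ×ˢ A ∩ {p | p.1 ≤ p.2 ↔ p.2 ≤ p.1})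
      + 2 * (μ.prod μ) (A ×ˢ A ∩ {p | p.1 < p.2}) = μ A ^ 2 := by
  have hge : MeasurableSet {p : α × α | p.2 ≤ p.1} := measurable_swap hle
  have hlt : MeasurableSet {p : α × α | p.1 < p.2} := by
    convert hle.diff hge using 1; ext; simp [lt_iff_le_not_ge]
  have hgt : MeasurableSet {p : α × α | p.2 < p.1} := measurable_swap hlt
  have hswap : (μ.prod μ) (A ×ˢ A ∩ {p | p.2 < p.1}) = (μ.prod μ) (A ×ˢ A ∩ {p | p.1 < p.2}) := by
    rw [← measurePreserving_swap.measure_preimage ((hA.prod hA).inter hgt).nullMeasurableSet]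
    congr 1; ext p
    simp only [mem_preimage, mem_inter_iff, mem_prod, Prod.fst_swap, Prod.snd_swap]; tauto
  have hsplit : A ×ˢ A = (A ×ˢ A ∩ {p | p.1 ≤ p.2 ↔ p.2 ≤ p.1}
      ∪ A ×ˢ A ∩ {p | p.1 < p.2}) ∪ A ×ˢ A ∩ {p | p.2 < p.1} := by
    ext p; simp only [mem_prod, mem_union, mem_inter_iff, mem_ofPred_eq, lt_iff_le_not_ge]; tauto
  have hdisj₁ : Disjoint (A ×ˢ A ∩ {p | p.1 ≤ p.2 ↔ p.2 ≤ p.1}) (A ×ˢ A ∩ {p | p.1 < p.2}) := by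
    rw [disjoint_left]; rintro p ⟨-, h⟩ ⟨-, h'⟩
    simp only [mem_ofPred_eq, lt_iff_le_not_ge] at h h'; tauto
  have hdisj₂ : Disjoint (A ×ˢ A ∩ {p | p.1 ≤ p.2 ↔ p.2 ≤ p.1} ∪ A ×ˢ A ∩ {p | p.1 < p.2})
      (A ×ˢ A ∩ {p | p.2 < p.1}) := by
    rw [disjoint_left]; rintro p (⟨-, h⟩ | ⟨-, h⟩) ⟨-, h'⟩ <;>
      simp only [mem_ofPred_eq, lt_iff_le_not_ge] at h h' <;> tauto
  calc
    _ = (μ.prod μ) ((A ×ˢ A ∩ {p | p.1 ≤ p.2 ↔ p.2 ≤ p.1}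
        ∪ A ×ˢ A ∩ {p | p.1 < p.2}) ∪ A ×ˢ A ∩ {p | p.2 < p.1}) := by
      rw [measure_union hdisj₂ ((hA.prod hA).inter hgt),
        measure_union hdisj₁ ((hA.prod hA).inter hlt), hswap, two_mul, add_assoc]
    _ = μ A ^ 2 := by rw [← hsplit, prod_prod, sq]

end MeasureTheory.Measure

section UnitSquare

theorem Ioi_inter_Icc_of_le {α : Type*} [Preorder α] {a b c : α} (h : b ≤ a) :
    Ioi a ∩ Icc b c = Ioc a c := by
  rw [← Ici_inter_Iic, ← inter_assoc, inter_eq_left.2 (Ioi_subset_Ici h), Ioi_inter_Iic]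

theorem Iic_inter_Icc_of_le {α : Type*} [Preorder α] {a b c : α} (h : a ≤ c) :
    Iic a ∩ Icc b c = Icc b a := by
  ext t; simp only [mem_inter_iff, mem_Iic, mem_Icc]
  exact ⟨fun ⟨hta, hbt, _⟩ => ⟨hbt, hta⟩, fun ⟨hbt, hta⟩ => ⟨hta, hbt, hta.trans h⟩⟩

local notation "ν" => Measure.restrict (volume : Measure ℝ) (Icc 0 1)

theorem setLIntegral_ofReal_Ioc {a b : ℝ} (ha : 0 ≤ a) (hab : a ≤ b) :
    ∫⁻ t in Ioc a b, ENNReal.ofReal t = ENNReal.ofReal ((b ^ 2 - a ^ 2) / 2) := by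
  rw [← ofReal_integral_eq_lintegral_ofReal, ← intervalIntegral.integral_of_le hab, integral_id]
  · exact (intervalIntegral.intervalIntegrable_id (μ := volume)).1
  · filter_upwards [ae_restrict_mem measurableSet_Ioc] with t ht using ha.trans ht.1.le

theorem lintegral_ofReal_restrict_Icc : ∫⁻ t, ENNReal.ofReal t ∂ν = ENNReal.ofReal (1 / 2) := by
  rw [← Measure.restrict_congr_set Ioc_ae_eq_Icc, setLIntegral_ofReal_Ioc le_rfl zero_le_one]
  norm_num


theorem setLIntegral_ofReal_Ioi_restrict_Icc {a : ℝ} (ha₀ : 0 ≤ a) (ha₁ : a ≤ 1) :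
    ∫⁻ t in Ioi a, ENNReal.ofReal t ∂ν = ENNReal.ofReal ((1 - a ^ 2) / 2) := by
  rw [Measure.restrict_restrict measurableSet_Ioi, Ioi_inter_Icc_of_le ha₀,
    setLIntegral_ofReal_Ioc ha₀ ha₁, one_pow]

theorem volume_restrict_Icc_Ioi {a : ℝ} (ha₀ : 0 ≤ a) :
    ν (Ioi a) = ENNReal.ofReal (1 - a) := by
  rw [Measure.restrict_apply measurableSet_Ioi, Ioi_inter_Icc_of_le ha₀, Real.volume_Ioc]

theorem volume_restrict_Icc_Iic {y : ℝ} (hy : y ≤ 1) : ν (Iic y) = ENNReal.ofReal y := by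
  rw [Measure.restrict_apply measurableSet_Iic, Iic_inter_Icc_of_le hy, Real.volume_Icc,
    sub_zero]

theorem μsq_eq_prod : μsq = Measure.prod ν ν := by
  rw [μsq, Measure.volume_eq_prod, Measure.prod_restrict]

instance : IsProbabilityMeasure μsq := by
  rw [μsq_eq_prod]
  have : IsProbabilityMeasure ν := ⟨by simp [Real.volume_Icc]⟩
  infer_instance

instance : NullSingletonClass μsq := Measure.restrict.instNullSingletonClass _

theorem μsq_Iic {y : ℝ × ℝ} (h₁ : y.1 ≤ 1) (h₂ : y.2 ≤ 1) :
    μsq (Iic y) = ENNReal.ofReal y.1 * ENNReal.ofReal y.2 := by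
  rw [μsq_eq_prod, ← Iic_prod_Iic, Measure.prod_prod, volume_restrict_Icc_Iic h₁,
    volume_restrict_Icc_Iic h₂]

theorem μsq_real_Ioi_prod_Ioi {a : ℝ} (ha₀ : 0 ≤ a) (ha₁ : a ≤ 1) :
    μsq.real (Ioi a ×ˢ Ioi a) = (1 - a) ^ 2 := by
  rw [measureReal_def, μsq_eq_prod, Measure.prod_prod, volume_restrict_Icc_Ioi ha₀,
    ← ENNReal.ofReal_mul (by linarith), ENNReal.toReal_ofReal (by positivity), sq]

theorem lintegral_μsq_ofReal_mul :
    ∫⁻ y, ENNReal.ofReal y.1 * ENNReal.ofReal y.2 ∂μsq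
      = ENNReal.ofReal (1 / 2) * ENNReal.ofReal (1 / 2) := by
  rw [μsq_eq_prod, lintegral_prod_mul (by fun_prop) (by fun_prop), lintegral_ofReal_restrict_Icc]

theorem setLIntegral_μsq_ofReal_mul_Ioi_prod_Ioi {a : ℝ} (ha₀ : 0 ≤ a) (ha₁ : a ≤ 1) :
    ∫⁻ y in Ioi a ×ˢ Ioi a, ENNReal.ofReal y.1 * ENNReal.ofReal y.2 ∂μsq
      = ENNReal.ofReal ((1 - a ^ 2) / 2) * ENNReal.ofReal ((1 - a ^ 2) / 2) := by
  rw [μsq_eq_prod, ← Measure.prod_restrict, lintegral_prod_mul (by fun_prop) (by fun_prop),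
    setLIntegral_ofReal_Ioi_restrict_Icc ha₀ ha₁]

end UnitSquare

def Tmin (a : ℝ) : Set (ℝ × ℝ) := {p | min p.1 p.2 ≤ a}

theorem measurableSet_Tmin (a : ℝ) : MeasurableSet (Tmin a) :=
  measurableSet_le (by fun_prop) measurable_const

theorem isLowerSet_Tmin (a : ℝ) : IsLowerSet (Tmin a) :=
  fun _ _ hle h => (min_le_min hle.1 hle.2).trans h

theorem compl_Tmin (a : ℝ) : (Tmin a)ᶜ = Ioi a ×ˢ Ioi a := by
  ext p; simp [Tmin]

theorem μsq_real_Tmin {a : ℝ} (ha₀ : 0 ≤ a) (ha₁ : a ≤ 1) : μsq.real (Tmin a) = 2 * a - a ^ 2 := by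
  rw [← compl_compl (Tmin a), probReal_compl_eq_one_sub (measurableSet_Tmin a).compl, compl_Tmin,
    μsq_real_Ioi_prod_Ioi ha₀ ha₁]
  ring

theorem μsq_prod_real_Tmin_inter_le {a : ℝ} (ha₀ : 0 ≤ a) (ha₁ : a ≤ 1) :
    (μsq.prod μsq).real (Tmin a ×ˢ Tmin a ∩ {p | p.1 ≤ p.2}) = 1 / 4 - ((1 - a ^ 2) / 2) ^ 2 := by
  have hIic : ∫⁻ y in Tmin a, μsq (Iic y) ∂μsq
      = ∫⁻ y in Tmin a, ENNReal.ofReal y.1 * ENNReal.ofReal y.2 ∂μsq := by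
    refine setLIntegral_congr_fun_ae (measurableSet_Tmin a) ?_
    filter_upwards [ae_restrict_mem (measurableSet_Icc.prod measurableSet_Icc)] with y hy _
    exact μsq_Iic hy.1.2 hy.2.2
  have hsplit := lintegral_add_compl (μ := μsq) (fun y => ENNReal.ofReal y.1 * ENNReal.ofReal y.2)
    (measurableSet_Tmin a)
  rw [compl_Tmin, setLIntegral_μsq_ofReal_mul_Ioi_prod_Ioi ha₀ ha₁, lintegral_μsq_ofReal_mul,
    ← hIic] at hsplit
  have hfin : ∫⁻ y in Tmin a, μsq (Iic y) ∂μsq ≠ ∞ :=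
    (ENNReal.add_ne_top.1 (by rw [hsplit]; finiteness)).1
  rw [measureReal_def, Measure.prod_inter_le_of_isLowerSet μsq measurableSet_le'
    (measurableSet_Tmin a) (isLowerSet_Tmin a)]
  have hreal := congrArg ENNReal.toReal hsplit
  rw [ENNReal.toReal_add hfin (by finiteness), ENNReal.toReal_mul, ENNReal.toReal_mul,
    ENNReal.toReal_ofReal (by nlinarith), ENNReal.toReal_ofReal (by norm_num)] at hreal
  linarith

theorem cho_eq_prod_inter (A : Set (ℝ × ℝ)) :
    cho A = (μsq.prod μsq) (A ×ˢ A ∩ {p | p.1 ≤ p.2 ↔ p.2 ≤ p.1}) := by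
  rw [cho]; congr 1; ext p; simp only [mem_ofPred_eq, mem_inter_iff, mem_prod, and_assoc]
  -- `Rsq` is definitionally the product order on `ℝ × ℝ`.
  rfl

theorem cho_Tmin {a : ℝ} (ha₀ : 0 ≤ a) (ha₁ : a ≤ 1) :
    (cho (Tmin a)).toReal = 3 * a ^ 2 - 4 * a ^ 3 + 3 / 2 * a ^ 4 := by
  have h := congrArg ENNReal.toReal <|
    Measure.prod_comparable_add_two_mul_prod_lt μsq measurableSet_le' (measurableSet_Tmin a)
  rw [Measure.prod_inter_lt_eq_prod_inter_le, ENNReal.toReal_add (by finiteness) (by finiteness),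
    ← cho_eq_prod_inter, ENNReal.toReal_mul, ENNReal.toReal_ofNat, ENNReal.toReal_pow,
    ← measureReal_def, ← measureReal_def, μsq_real_Tmin ha₀ ha₁,
    μsq_prod_real_Tmin_inter_le ha₀ ha₁] at h
  linear_combination h

/-- For `T_min(a) = {(x₁,x₂) ∈ [0,1]² : min(x₁,x₂) ≤ a}`, the diversity
`div(T_min(a)) = cho(T_min(a))/μ(T_min(a))²` tends to `3/4` as `a → 0⁺`. -/
theorem diversity_Tmin_tendsto :
    Tendsto
      (fun a : ℝ =>
        (cho {p : ℝ × ℝ | min p.1 p.2 ≤ a}).toReal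
          / ((μsq {p : ℝ × ℝ | min p.1 p.2 ≤ a}).toReal) ^ 2)
      (nhdsWithin 0 (Set.Ioi 0)) (nhds (3 / 4)) := by
  have hlim : Tendsto (fun a : ℝ => (3 - 4 * a + 3 / 2 * a ^ 2) / (2 - a) ^ 2)
      (nhdsWithin 0 (Ioi 0)) (nhds (3 / 4)) := by
    have hcont : ContinuousAt (fun a : ℝ => (3 - 4 * a + 3 / 2 * a ^ 2) / (2 - a) ^ 2) 0 :=
      ContinuousAt.div (by fun_prop) (by fun_prop) (by norm_num)
    convert hcont.tendsto.mono_left nhdsWithin_le_nhds using 2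
    norm_num
  refine hlim.congr' ?_
  filter_upwards [Ioo_mem_nhdsGT zero_lt_one] with a ⟨ha₀, ha₁⟩
  change _ = (cho (Tmin a)).toReal / μsq.real (Tmin a) ^ 2
  rw [cho_Tmin ha₀.le ha₁.le, μsq_real_Tmin ha₀.le ha₁.le]
  have h2a : 2 - a ≠ 0 := by linarith
  field_simp
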